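/- Let P, Q, R, S be four distinct collinear points (P ≠ Q, R ≠ S) and C a point on the same line with (C−Q)/(C−R) = (Q−S)/(R−P). Then (C−S)/(C−R) = ((Q−S)/(Q−R))·((P−S)/(P−R)). -/
import Mathlib


open Classical in
noncomputable def ratio {k : Type*} [Field k] (X Y Z W : k × k) : k :=
  if h : ∃ r : k, X - Y = r • (Z - W) then h.choose else 0

lemma smul_cancel_of_ne {k : Type*} [Field k] {v : k × k} (hv : v ≠ 0) {a b : k}
    (h : a • v = b • v) : a = b := by
  by_contra hab
  have : (a - b) • v = 0 := by rw [sub_smul, h, sub_self]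
  rcases smul_eq_zero.mp this with h' | h'
  · exact hab (sub_eq_zero.mp h')
  · exact hv h'

lemma ratio_eq {k : Type*} [Field k] {X Y Z W : k × k} {v : k × k} {a b : k}
    (hv : v ≠ 0) (hb : b ≠ 0) (hXY : X - Y = a • v) (hZW : Z - W = b • v) :
    ratio X Y Z W = a / b := by
  have hex : ∃ r : k, X - Y = r • (Z - W) := ⟨a / b, by
    rw [hXY, hZW, smul_smul, div_mul_cancel₀ _ hb]⟩
  rw [ratio, dif_pos hex]
  have hspec := hex.choose_spec
  have h2 : a • v = (hex.choose * b) • v := by rw [← smul_smul, ← hZW, ← hspec, hXY]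
  have h3 := smul_cancel_of_ne hv h2
  rw [eq_div_iff hb]
  linear_combination -h3

lemma ratio_eq' {k : Type*} [Field k] {X Y Z W : k × k} {v : k × k} {a b : k}
    (hv : v ≠ 0) (hb : b ≠ 0) (hXY : X - Y = a • v) (hZW : Z - W = b • v) :
    ratio X Y Z W = a / b := ratio_eq hv hb hXY hZW

theorem stmt2 {k : Type*} [Field k] (P Q R S C : k × k)
    (hcol : Collinear k ({P, Q, R, S, C} : Set (k × k)))
    (hPQ : P ≠ Q) (hRS : R ≠ S) (hRP : R ≠ P) (hRQ : R ≠ Q) (hSP : S ≠ P) (hSQ : S ≠ Q)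
    (hCP : C ≠ P) (hCQ : C ≠ Q) (hCR : C ≠ R) (hCS : C ≠ S)
    (h : ratio C Q C R = ratio Q S R P) :
    ratio C S C R = ratio Q S Q R * ratio P S P R := by
  have hPmem : P ∈ ({P, Q, R, S, C} : Set (k × k)) := by simp
  rw [collinear_iff_of_mem hPmem] at hcol
  obtain ⟨v, hv⟩ := hcol
  obtain ⟨p, hp⟩ := hv P (by simp)
  obtain ⟨q, hq⟩ := hv Q (by simp)
  obtain ⟨r, hr⟩ := hv R (by simp)
  obtain ⟨s, hs⟩ := hv S (by simp)
  obtain ⟨c, hc⟩ := hv C (by simp)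
  simp only [vadd_eq_add] at hp hq hr hs hc
  have hv0 : v ≠ 0 := by
    intro h0
    apply hPQ
    rw [hp, hq, h0, smul_zero, smul_zero]
  have key : ∀ (X Y : k × k) (x y : k), X = x • v + P → Y = y • v + P →
      X - Y = (x - y) • v := by
    intro X Y x y hX hY
    rw [hX, hY, sub_smul]; abel
  have diffne : ∀ (X Y : k × k) (x y : k), X = x • v + P → Y = y • v + P → X ≠ Y →
      x - y ≠ 0 := by
    intro X Y x y hX hY hne h0
    apply hne
    have : X - Y = (0 : k) • v := by rw [key X Y x y hX hY, h0]
    rw [zero_smul] at this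
    exact sub_eq_zero.mp this
  have hcr : c - r ≠ 0 := diffne C R c r hc hr hCR
  have hrp : r - p ≠ 0 := diffne R P r p hr hp hRP
  have hqr : q - r ≠ 0 := by
    have := diffne R Q r q hr hq hRQ
    intro h0; exact this (by linear_combination -h0)
  have hpr : p - r ≠ 0 := by
    intro h0; apply hrp; rw [← neg_sub] at h0; simpa using neg_eq_zero.mp h0
  rw [ratio_eq hv0 hcr (key C Q c q hc hq) (key C R c r hc hr),
      ratio_eq hv0 hrp (key Q S q s hq hs) (key R P r p hr hp)] at h
  rw [ratio_eq hv0 hcr (key C S c s hc hs) (key C R c r hc hr),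
      ratio_eq hv0 hqr (key Q S q s hq hs) (key Q R q r hq hr),
      ratio_eq hv0 hpr (key P S p s hp hs) (key P R p r hp hr)]
  have hE : (c - q) * (r - p) = (q - s) * (c - r) := by
    field_simp at h
    linear_combination h
  field_simp
  linear_combination (r - s) * hE
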